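/- arXiv:2409.05078 — 2 statements merged into one kernel-verified Lean document; each statement's English description precedes it below -/
import Mathlib

section
/- Let F : [0, ∞) → ℝ be locally absolutely continuous and nonincreasing, with F(0) < 4π, and suppose that for almost every t ≥ 0, F'(t) ≤ max{ −2 F(t), ε (2 F(t) − 8π) } for some constant ε ∈ (0, 1/3]. Then there exist t̃ ≥ 0 and a constant C > 0 such that F(t) ≤ C e^{−2t} for all t ≥ t̃. -/
open MeasureTheory Real

/-- If `F` is locally absolutely continuous and nonincreasing on `[0,∞)`, `F(0) < 4π`,
and a.e. `F'(t) ≤ max{−2F(t), ε(2F(t) − 8π)}` with `ε ∈ (0, 1/3]`, then `F` decays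
exponentially: `F(t) ≤ C e^{−2t}` for all large `t`. -/
theorem stmt2 (F F' : ℝ → ℝ)
    (hint : ∀ s t : ℝ, IntervalIntegrable F' volume s t)
    (hAC : ∀ s t : ℝ, 0 ≤ s → s ≤ t → F t - F s = ∫ r in s..t, F' r)
    (hmono : AntitoneOn F (Set.Ici (0 : ℝ)))
    (hF0 : F 0 < 4 * π)
    (ε : ℝ) (hε : 0 < ε) (hε' : ε ≤ 1 / 3)
    (hode : ∀ᵐ t ∂volume, 0 ≤ t →
      F' t ≤ max (-2 * F t) (ε * (2 * F t - 8 * π))) :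
    ∃ t₀ ≥ (0 : ℝ), ∃ C > (0 : ℝ), ∀ t ≥ t₀, F t ≤ C * exp (-2 * t) := by
  have hπ := Real.pi_pos
  set δ : ℝ := 4 * ε * π / (1 + ε) with hδdef
  have hδpos : 0 < δ := by
    apply div_pos (by nlinarith) (by linarith)
  -- integrability of F on compact intervals of [0,∞)
  have hFint : ∀ a b : ℝ, 0 ≤ a → a ≤ b → IntervalIntegrable F volume a b := by
    intro a b h0a hab
    apply AntitoneOn.intervalIntegrable
    apply hmono.mono
    rw [Set.uIcc_of_le hab]
    exact fun x hx => le_trans h0a hx.1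
  -- Stage 1: there is a point where F drops below δ
  have hex : ∃ t₀ ≥ (0:ℝ), F t₀ ≤ δ := by
    by_contra hcon
    push_neg at hcon
    set m : ℝ := min (2*δ) (2*ε*(4*π - F 0)) with hmdef
    have hm : 0 < m := lt_min (by linarith) (by nlinarith)
    have hF0δ : δ < F 0 := hcon 0 le_rfl
    set T : ℝ := (F 0 - δ)/m + 1 with hTdef
    have hT : 0 ≤ T := by
      have h : 0 ≤ (F 0 - δ)/m := div_nonneg (by linarith) hm.le
      rw [hTdef]; linarith
    have hb : F T - F 0 = ∫ r in (0:ℝ)..T, F' r := hAC 0 T le_rfl hT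
    have hle : (∫ r in (0:ℝ)..T, F' r) ≤ ∫ _r in (0:ℝ)..T, (-m) := by
      apply intervalIntegral.integral_mono_ae_restrict hT (hint 0 T)
        intervalIntegrable_const
      filter_upwards [ae_restrict_mem measurableSet_Icc, ae_restrict_of_ae hode]
        with r hr hode'
      have h0r : 0 ≤ r := hr.1
      have h1 : δ < F r := hcon r h0r
      have h2 : F r ≤ F 0 := hmono (Set.self_mem_Ici) (Set.mem_Ici.mpr h0r) h0r
      have hm1 : m ≤ 2*δ := min_le_left _ _
      have hm2 : m ≤ 2*ε*(4*π - F 0) := min_le_right _ _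
      refine le_trans (hode' h0r) (max_le (by linarith) (by nlinarith))
    rw [intervalIntegral.integral_const, smul_eq_mul] at hle
    have hmT : m * T = (F 0 - δ) + m := by
      rw [hTdef]; field_simp
    have hFT : F T ≤ δ - m := by nlinarith
    have := hcon T hT
    linarith
  obtain ⟨t₀, ht₀, hFt₀⟩ := hex
  -- one-step discrete Gronwall estimate on [t₀, ∞)
  have step : ∀ a b : ℝ, t₀ ≤ a → a ≤ b → (1 + 2*(b-a)) * F b ≤ F a := by
    intro a b hta hab
    have h0a : 0 ≤ a := le_trans ht₀ hta
    have h0b : 0 ≤ b := le_trans h0a hab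
    have hFb : IntervalIntegrable (fun r => -2 * F r) volume a b :=
      (hFint a b h0a hab).const_mul (-2)
    have hi1 : (∫ r in a..b, F' r) ≤ ∫ r in a..b, (-2 * F r) := by
      apply intervalIntegral.integral_mono_ae_restrict hab (hint a b) hFb
      filter_upwards [ae_restrict_mem measurableSet_Icc, ae_restrict_of_ae hode]
        with r hr hode'
      have h0r : 0 ≤ r := le_trans h0a hr.1
      have hFr : F r ≤ δ :=
        le_trans (hmono (Set.mem_Ici.mpr ht₀) (Set.mem_Ici.mpr h0r)
          (le_trans hta hr.1)) hFt₀
      have h1 : F r * (1 + ε) ≤ 4 * ε * π := (le_div_iff₀ (by linarith)).mp hFr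
      have h2 : ε * (2 * F r - 8 * π) ≤ -2 * F r := by nlinarith
      refine le_trans (hode' h0r) (max_le le_rfl h2)
    have hi2 : (∫ r in a..b, (-2 * F r)) ≤ ∫ _r in a..b, (-2 * F b) := by
      apply intervalIntegral.integral_mono_on hab hFb intervalIntegrable_const
      intro r hr
      have : F b ≤ F r := hmono (Set.mem_Ici.mpr (le_trans h0a hr.1))
        (Set.mem_Ici.mpr h0b) hr.2
      linarith
    rw [intervalIntegral.integral_const, smul_eq_mul] at hi2
    have hb := hAC a b h0a hab
    nlinarith
  -- iterate: F t ≤ F t₀ / (1 + 2(t-t₀)/n)^n for each n ≥ 1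
  have key : ∀ t : ℝ, t₀ ≤ t → F t ≤ F t₀ * exp (-2*(t - t₀)) := by
    intro t ht
    have hts : 0 ≤ t - t₀ := by linarith
    have hn : ∀ n : ℕ, 1 ≤ n → F t ≤ F t₀ / (1 + 2*((t-t₀)/n))^n := by
      intro n hn1
      have hnpos : (0:ℝ) < n := by exact_mod_cast hn1
      set h : ℝ := (t - t₀)/n with hhdef
      have hh : 0 ≤ h := div_nonneg hts hnpos.le
      have hhp : (0:ℝ) < 1 + 2*h := by linarith
      have ind : ∀ i : ℕ, i ≤ n → F (t₀ + i*h) ≤ F t₀ / (1 + 2*h)^i := by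
        intro i
        induction i with
        | zero => intro _; simp
        | succ i ih =>
          intro hi
          have hii : i ≤ n := le_of_lt (Nat.lt_of_succ_le hi)
          have hipos : (0:ℝ) ≤ i := Nat.cast_nonneg i
          have ha : t₀ ≤ t₀ + i*h := by nlinarith
          have hab : t₀ + i*h ≤ t₀ + (i+1:ℕ)*h := by push_cast; nlinarith
          have hst := step (t₀ + i*h) (t₀ + (i+1:ℕ)*h) ha hab
          have hdiff : (t₀ + (i+1:ℕ)*h) - (t₀ + i*h) = h := by push_cast; ring
          rw [hdiff] at hst
          have := ih hii
          have hpow : (0:ℝ) < (1 + 2*h)^i := pow_pos hhp i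
          rw [le_div_iff₀ (pow_pos hhp (i+1))]
          rw [le_div_iff₀ hpow] at this
          calc F (t₀ + (i+1:ℕ)*h) * (1 + 2*h)^(i+1)
              = ((1 + 2*h) * F (t₀ + (i+1:ℕ)*h)) * (1 + 2*h)^i := by ring
            _ ≤ F (t₀ + i*h) * (1 + 2*h)^i := by nlinarith
            _ ≤ F t₀ := this
      have := ind n le_rfl
      have hnh : t₀ + n*h = t := by
        rw [hhdef]; field_simp; ring
      rwa [hnh] at this
    -- take the limit n → ∞
    have hlim : Filter.Tendsto (fun n : ℕ => F t₀ / (1 + 2*((t-t₀)/n))^n)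
        Filter.atTop (nhds (F t₀ / exp (2*(t-t₀)))) := by
      apply Filter.Tendsto.div tendsto_const_nhds _ (exp_ne_zero _)
      have := Real.tendsto_one_add_div_pow_exp (2*(t-t₀))
      apply this.congr
      intro n
      congr 1
      ring
    have hfinal : F t ≤ F t₀ / exp (2*(t-t₀)) :=
      ge_of_tendsto hlim (Filter.eventually_atTop.mpr ⟨1, hn⟩)
    rwa [show (-2)*(t - t₀) = -(2*(t-t₀)) by ring, exp_neg, ← div_eq_mul_inv]
  -- assemble
  refine ⟨t₀, ht₀, max (F t₀ * exp (2*t₀)) 1, lt_of_lt_of_le one_pos (le_max_right _ _),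
    fun t ht => ?_⟩
  calc F t ≤ F t₀ * exp (-2*(t - t₀)) := key t ht
    _ = (F t₀ * exp (2*t₀)) * exp (-2*t) := by
        rw [mul_assoc, ← exp_add]; ring_nf
    _ ≤ max (F t₀ * exp (2*t₀)) 1 * exp (-2*t) :=
        mul_le_mul_of_nonneg_right (le_max_left _ _) (exp_nonneg _)
end

section
/- Let Σ be a closed (compact, boundaryless) surface of genus zero isometrically embedded in a Riemannian 3-manifold (M, g) satisfying the pinching condition Ric ≥ ε R g with ε > 0 and R ≥ 0. Then 2 ∫_Σ Ric(ν, ν) dμ ≥ ε (16π − ∫_Σ H² dμ), where ν is a unit normal and H the mean curvature of Σ. -/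
open MeasureTheory Real

/-- Genus-zero estimate. On a closed genus-zero surface `Σ` in a Ricci-pinched
3-manifold, abstracted via its surface measure `μ` and the pointwise geometric data:
`K` the Gauss curvature, `RicNN = Ric(ν,ν)`, `Ric1, Ric2` the Ricci curvatures of an
orthonormal tangent frame, `R` the ambient scalar curvature, `H` the mean curvature,
`h2 = |h|²`. The Gauss equation, the traceless estimate `|h|² ≥ H²/2`, the pinching
condition `Ric ≥ ε R g` (in the normal and tangent directions), `R ≥ 0`, and
Gauss–Bonnet `∫ K = 4π` (genus zero) give `2 ∫ Ric(ν,ν) ≥ ε (16π − ∫ H²)`. -/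
theorem stmt12 {S : Type*} [MeasurableSpace S] (μ : Measure S)
    (K RicNN Ric1 Ric2 R H h2 : S → ℝ) (ε : ℝ) (hε : 0 < ε)
    (hR : ∀ x, 0 ≤ R x)
    (hpinchN : ∀ x, ε * R x ≤ RicNN x)
    (hpinch1 : ∀ x, ε * R x ≤ Ric1 x)
    (hpinch2 : ∀ x, ε * R x ≤ Ric2 x)
    (htrace : ∀ x, R x = RicNN x + Ric1 x + Ric2 x)
    (hGauss : ∀ x, 2 * K x = R x - 2 * RicNN x - h2 x + H x ^ 2)
    (hh2 : ∀ x, H x ^ 2 / 2 ≤ h2 x)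
    (hGB : ∫ x, K x ∂μ = 4 * π)
    (hiK : Integrable K μ) (hiRic : Integrable RicNN μ)
    (hiH : Integrable (fun x => H x ^ 2) μ) (hih2 : Integrable h2 μ)
    (hiR : Integrable R μ) :
    ε * (16 * π - ∫ x, H x ^ 2 ∂μ) ≤ 2 * ∫ x, RicNN x ∂μ := by
  have key : ∀ x, ε * (4 * K x - H x ^ 2) ≤ 2 * RicNN x := by
    intro x
    have h1 := hR x
    have h2' := hpinchN x
    have h3 := hh2 x
    have h4 := hGauss x
    nlinarith [mul_nonneg hε.le (le_trans (mul_nonneg hε.le h1) h2'),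
      mul_le_mul_of_nonneg_left h3 hε.le, mul_le_mul_of_nonneg_left h2' hε.le,
      mul_nonneg hε.le h1]
  have hif : Integrable (fun x => ε * (4 * K x - H x ^ 2)) μ :=
    ((hiK.const_mul 4).sub hiH).const_mul ε
  have hmono : ∫ x, ε * (4 * K x - H x ^ 2) ∂μ ≤ ∫ x, 2 * RicNN x ∂μ :=
    integral_mono hif (hiRic.const_mul 2) key
  have h1 : ∫ x, ε * (4 * K x - H x ^ 2) ∂μ = ε * (16 * π - ∫ x, H x ^ 2 ∂μ) := by
    rw [integral_const_mul, integral_sub (hiK.const_mul 4) hiH, integral_const_mul, hGB]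
    ring
  have h2 : ∫ x, 2 * RicNN x ∂μ = 2 * ∫ x, RicNN x ∂μ := integral_const_mul 2 _
  linarith
end
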